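/- arXiv:2604.13507 — 10 statements merged into one kernel-verified Lean document; each statement's English description precedes it below -/
import Mathlib

section
/- Supermodularity is preserved under the 'feasibility clamp': if β: 2^Ω → ℕ is supermodular (β(∅)=0 and β(Γ)+β(Γ') ≤ β(Γ∪Γ')+β(Γ∩Γ') for all Γ,Γ'), q: Ω → ℕ is any function, and μ ∈ ℕ satisfies β(Ω) ≤ μ ≤ Σ_{ω∈Ω} q(ω) and β(Γ) − β(Γ∩Γ') ≤ Σ_{ω∈Γ\Γ'} q(ω) for all Γ,Γ' ⊆ Ω, then β_μ(Γ) := max{β(Γ), μ − Σ_{ω∉Γ} q(ω)} (with truncated subtraction) is supermodular and satisfies β_μ(Ω) = μ. -/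
open Finset

/-- Supermodularity on `Finset Ω` with values in `ℕ`. -/
def Supermodular {Ω : Type*} [DecidableEq Ω] (χ : Finset Ω → ℕ) : Prop :=
  χ ∅ = 0 ∧ ∀ Γ Γ' : Finset Ω, χ Γ + χ Γ' ≤ χ (Γ ∪ Γ') + χ (Γ ∩ Γ')

/-- Supermodularity is preserved under the feasibility clamp `β_μ`. -/
theorem supermodular_clamp {Ω : Type*} [Fintype Ω] [DecidableEq Ω]
    (β : Finset Ω → ℕ) (q : Ω → ℕ) (μ : ℕ)
    (hβ : Supermodular β)
    (hμ₁ : β Finset.univ ≤ μ)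
    (hμ₂ : μ ≤ ∑ ω, q ω)
    (hmarg : ∀ Γ Γ' : Finset Ω, β Γ - β (Γ ∩ Γ') ≤ ∑ ω ∈ Γ \ Γ', q ω) :
    Supermodular (fun Γ => max (β Γ) (μ - ∑ ω ∈ Finset.univ \ Γ, q ω)) ∧
    max (β Finset.univ) (μ - ∑ ω ∈ Finset.univ \ Finset.univ, q ω) = μ := by
  obtain ⟨hβ0, hβs⟩ := hβ
  refine ⟨⟨?_, ?_⟩, ?_⟩
  · simp only [Finset.sdiff_empty, hβ0]
    have : μ - ∑ ω ∈ (Finset.univ : Finset Ω), q ω = 0 := by omega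
    simp [this]
  · intro Γ Γ'
    simp only
    set a := β Γ with ha
    set a' := β Γ' with ha'
    set u := β (Γ ∪ Γ') with hu
    set i := β (Γ ∩ Γ') with hi
    set sΓ := ∑ ω ∈ Finset.univ \ Γ, q ω with hsΓ
    set sΓ' := ∑ ω ∈ Finset.univ \ Γ', q ω with hsΓ'
    set sU := ∑ ω ∈ Finset.univ \ (Γ ∪ Γ'), q ω with hsU
    set sI := ∑ ω ∈ Finset.univ \ (Γ ∩ Γ'), q ω with hsI
    have h1 : a + a' ≤ u + i := hβs Γ Γ'
    -- complement of Γ' splits into (Γ \ Γ') and complement of union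
    have hsplit : ∀ A B : Finset Ω, (∑ ω ∈ A \ B, q ω) + ∑ ω ∈ Finset.univ \ (A ∪ B), q ω
        = ∑ ω ∈ Finset.univ \ B, q ω := by
      intro A B
      rw [← Finset.sum_union]
      · congr 1
        ext ω; simp; try tauto
      · rw [Finset.disjoint_left]; intro ω h1 h2; simp at h1 h2; tauto
    have h2 : a + sU ≤ i + sΓ' := by
      have hm := hmarg Γ Γ'
      have hs := hsplit Γ Γ'
      rw [← ha, ← hi] at hm
      rw [← hsU, ← hsΓ'] at hs
      omega
    have h3 : a' + sU ≤ i + sΓ := by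
      have hm := hmarg Γ' Γ
      have hs := hsplit Γ' Γ
      rw [Finset.inter_comm, ← ha', ← hi] at hm
      rw [Finset.union_comm, ← hsU, ← hsΓ] at hs
      omega
    have h4 : sΓ + sΓ' = sU + sI := by
      have e1 : (Finset.univ \ Γ) ∪ (Finset.univ \ Γ') = Finset.univ \ (Γ ∩ Γ') := by
        ext ω; simp; try tauto
      have e2 : (Finset.univ \ Γ) ∩ (Finset.univ \ Γ') = Finset.univ \ (Γ ∪ Γ') := by
        ext ω; simp; try tauto
      have h := Finset.sum_union_inter (s₁ := Finset.univ \ Γ) (s₂ := Finset.univ \ Γ') (f := q)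
      rw [e1, e2, ← hsΓ, ← hsΓ', ← hsU, ← hsI] at h
      omega
    have h5 : sU ≤ sΓ := by
      apply Finset.sum_le_sum_of_subset
      intro ω h; simp at h ⊢; tauto
    have h6 : sU ≤ sΓ' := by
      apply Finset.sum_le_sum_of_subset
      intro ω h; simp at h ⊢; tauto
    simp only [Nat.max_def]
    split_ifs <;> omega
  · simp only [Finset.sdiff_self, Finset.sum_empty, Nat.sub_zero]
    exact max_eq_right hμ₁
end

section
/- The baseline function of a schedulable system is supermodular: given families of nonnegative values p_j^ω (nondecreasing in j) and λ̂_j^ω (nonnegative), and constants c_j, define β(Γ) := max_{j ∈ J} ( Σ_{ω∈Γ} p_j^ω + Σ_{ω∈Ω} λ̂_j^ω − c_j ) over a finite index set J on which the maximum exists and all listed values are finite; if β(∅) = 0 then β(Γ)+β(Γ') ≤ β(Γ∪Γ')+β(Γ∩Γ') for all Γ, Γ' ⊆ Ω. -/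
open Finset

/-- The baseline function of a schedulable worst-case system is supermodular:
given per-flow values `p j ω` (nondecreasing in `j`), `lam j ω ≥ 0`, and
capacities `c j`, with `β Γ := max_{j ∈ J} (Σ_{ω∈Γ} p j ω + Σ_{ω∈Ω} lam j ω − c j)`,
if `β ∅ = 0` then `β` is supermodular. -/
theorem baseline_supermodular {Ω : Type*} [Fintype Ω] [DecidableEq Ω]
    (J : Finset ℕ) (hJ : J.Nonempty)
    (p : ℕ → Ω → ℕ) (lam : ℕ → Ω → ℕ) (c : ℕ → ℤ)
    (hp : ∀ ω, Monotone (fun j => p j ω))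
    (β : Finset Ω → ℤ)
    (hβ : ∀ Γ : Finset Ω,
      β Γ = J.sup' hJ (fun j =>
        (∑ ω ∈ Γ, (p j ω : ℤ)) + (∑ ω : Ω, (lam j ω : ℤ)) - c j))
    (hβ0 : β ∅ = 0) :
    ∀ Γ Γ' : Finset Ω, β Γ + β Γ' ≤ β (Γ ∪ Γ') + β (Γ ∩ Γ') := by
  -- key inequality for sums
  have key : ∀ (j j' : ℕ), j' ≤ j → ∀ (Γ Γ' : Finset Ω),
      (∑ ω ∈ Γ, (p j ω : ℤ)) + (∑ ω ∈ Γ', (p j' ω : ℤ)) ≤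
      (∑ ω ∈ Γ ∪ Γ', (p j ω : ℤ)) + (∑ ω ∈ Γ ∩ Γ', (p j' ω : ℤ)) := by
    intro j j' hjj Γ Γ'
    have hU : (∑ ω ∈ Γ ∪ Γ', (p j ω : ℤ)) =
        (∑ ω ∈ Γ, (p j ω : ℤ)) + (∑ ω ∈ Γ' \ Γ, (p j ω : ℤ)) := by
      rw [← Finset.sum_union (Finset.disjoint_sdiff), Finset.union_sdiff_self_eq_union]
    have hI : (∑ ω ∈ Γ', (p j' ω : ℤ)) =
        (∑ ω ∈ Γ ∩ Γ', (p j' ω : ℤ)) + (∑ ω ∈ Γ' \ Γ, (p j' ω : ℤ)) := by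
      rw [← Finset.sum_union]
      · congr 1
        ext ω; simp [Finset.mem_inter, Finset.mem_sdiff, Finset.mem_union]; tauto
      · exact Finset.disjoint_left.2 (by intro ω h h'; simp at h h'; tauto)
    rw [hU, hI]
    have : (∑ ω ∈ Γ' \ Γ, (p j' ω : ℤ)) ≤ (∑ ω ∈ Γ' \ Γ, (p j ω : ℤ)) :=
      Finset.sum_le_sum (fun ω _ => by exact_mod_cast hp ω hjj)
    linarith
  intro Γ Γ'
  set f : Finset Ω → ℕ → ℤ := fun S j =>
    (∑ ω ∈ S, (p j ω : ℤ)) + (∑ ω : Ω, (lam j ω : ℤ)) - c j with hf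
  obtain ⟨j, hjJ, hj⟩ := Finset.exists_mem_eq_sup' hJ (f Γ)
  obtain ⟨j', hj'J, hj'⟩ := Finset.exists_mem_eq_sup' hJ (f Γ')
  have main : ∀ (a b : ℕ), b ≤ a → a ∈ J → b ∈ J → ∀ (A B : Finset Ω),
      f A a + f B b ≤ β (A ∪ B) + β (A ∩ B) := by
    intro a b hab haJ hbJ A B
    have h1 : f (A ∪ B) a ≤ β (A ∪ B) := by
      rw [hβ]; exact Finset.le_sup' _ haJ
    have h2 : f (A ∩ B) b ≤ β (A ∩ B) := by
      rw [hβ]; exact Finset.le_sup' _ hbJ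
    have := key a b hab A B
    simp only [hf] at *
    linarith
  have e1 : β Γ = f Γ j := by rw [hβ]; exact hj
  have e2 : β Γ' = f Γ' j' := by rw [hβ]; exact hj'
  rw [e1, e2]
  rcases le_total j' j with h | h
  · exact main j j' h hjJ hj'J Γ Γ'
  · have := main j' j h hj'J hjJ Γ' Γ
    rw [Finset.union_comm, Finset.inter_comm] at this
    linarith
end

section
/- For a supermodular function χ: 2^Ω → ℤ and a permutation π of Ω = {1,…,n}, the vertex v_π defined by v_π(ω) := χ(Γ_π^{π(ω)}) − χ(Γ_π^{π(ω)−1}), where Γ_π^i := {ω | π(ω) ≤ i}, lies in the permutohedron P(χ): it satisfies Σ_{ω∈Γ} v_π(ω) ≥ χ(Γ) for all Γ ⊆ Ω and Σ_{ω∈Ω} v_π(ω) = χ(Ω). -/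
open Finset

/-- For a supermodular `χ` and a permutation `π` of `Fin n`, the vertex `v_π`
defined by `v_π ω = χ(Γ_π^{π ω + 1}) − χ(Γ_π^{π ω})`, where
`Γ_π^i = {ω | π ω < i}`, lies in the permutohedron `P(χ)`. -/
theorem vertex_mem_permutohedron (n : ℕ) (χ : Finset (Fin n) → ℤ)
    (hχ0 : χ ∅ = 0)
    (hχ : ∀ Γ Γ' : Finset (Fin n), χ Γ + χ Γ' ≤ χ (Γ ∪ Γ') + χ (Γ ∩ Γ'))
    (π : Equiv.Perm (Fin n)) :
    (∀ Γ : Finset (Fin n),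
        χ Γ ≤ ∑ ω ∈ Γ,
          (χ (Finset.univ.filter fun ω' => (π ω' : ℕ) < (π ω : ℕ) + 1) -
           χ (Finset.univ.filter fun ω' => (π ω' : ℕ) < (π ω : ℕ)))) ∧
    (∑ ω : Fin n,
        (χ (Finset.univ.filter fun ω' => (π ω' : ℕ) < (π ω : ℕ) + 1) -
         χ (Finset.univ.filter fun ω' => (π ω' : ℕ) < (π ω : ℕ)))) = χ Finset.univ := by
  set G : ℕ → Finset (Fin n) := fun i => Finset.univ.filter fun ω' => (π ω' : ℕ) < i with hG
  have hG0 : G 0 = ∅ := by simp [hG]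
  have hGn : G n = Finset.univ := by
    ext ω; simp [hG, (π ω).isLt]
  have key : ∀ i, ∀ Γ : Finset (Fin n),
      χ (Γ ∩ G i) ≤ ∑ ω ∈ Γ.filter (fun ω => (π ω : ℕ) < i),
        (χ (G ((π ω : ℕ) + 1)) - χ (G (π ω : ℕ))) := by
    intro i
    induction i with
    | zero => intro Γ; simp [hG0, hχ0]
    | succ i ih =>
      intro Γ
      by_cases hin : i < n
      · set ωi := π.symm ⟨i, hin⟩ with hωi
        have hπωi : (π ωi : ℕ) = i := by simp [hωi]
        have hmemG : ∀ ω : Fin n, ω ∈ G (i + 1) ↔ ω = ωi ∨ ω ∈ G i := by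
          intro ω
          simp only [hG, mem_filter, mem_univ, true_and, Nat.lt_succ_iff_lt_or_eq]
          constructor
          · rintro (h | h)
            · exact Or.inr h
            · left
              have : π ω = ⟨i, hin⟩ := Fin.ext h
              rw [hωi, ← this]; simp
          · rintro (h | h)
            · right; rw [h, hπωi]
            · exact Or.inl h
        by_cases hΓ : ωi ∈ Γ
        · have h1 : (Γ ∩ G (i + 1)) ∪ G i = G (i + 1) := by
            ext ω
            simp only [mem_union, mem_inter, hmemG]
            constructor
            · rintro (⟨_, h⟩ | h)
              · exact h
              · exact Or.inr h
            · rintro (h | h)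
              · exact Or.inl ⟨h ▸ hΓ, Or.inl h⟩
              · exact Or.inr h
          have h2 : (Γ ∩ G (i + 1)) ∩ G i = Γ ∩ G i := by
            ext ω
            simp only [mem_inter, hmemG]
            tauto
          have hsup := hχ (Γ ∩ G (i + 1)) (G i)
          rw [h1, h2] at hsup
          have hfil : Γ.filter (fun ω => (π ω : ℕ) < i + 1)
              = insert ωi (Γ.filter (fun ω => (π ω : ℕ) < i)) := by
            ext ω
            simp only [mem_filter, mem_insert, Nat.lt_succ_iff_lt_or_eq]
            constructor
            · rintro ⟨hω, h | h⟩
              · exact Or.inr ⟨hω, h⟩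
              · left
                have : π ω = ⟨i, hin⟩ := Fin.ext h
                rw [hωi, ← this]; simp
            · rintro (h | ⟨hω, h⟩)
              · exact ⟨h ▸ hΓ, Or.inr (by rw [h, hπωi])⟩
              · exact ⟨hω, Or.inl h⟩
          have hnot : ωi ∉ Γ.filter (fun ω => (π ω : ℕ) < i) := by
            simp [hπωi]
          rw [hfil, Finset.sum_insert hnot, hπωi]
          have := ih Γ
          omega
        · have h3 : Γ ∩ G (i + 1) = Γ ∩ G i := by
            ext ω
            simp only [mem_inter, hmemG]
            constructor
            · rintro ⟨hω, h | h⟩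
              · exact absurd (h ▸ hω) hΓ
              · exact ⟨hω, h⟩
            · rintro ⟨hω, h⟩; exact ⟨hω, Or.inr h⟩
          have h4 : Γ.filter (fun ω => (π ω : ℕ) < i + 1)
              = Γ.filter (fun ω => (π ω : ℕ) < i) := by
            ext ω
            simp only [mem_filter, Nat.lt_succ_iff_lt_or_eq]
            constructor
            · rintro ⟨hω, h | h⟩
              · exact ⟨hω, h⟩
              · exfalso
                have : π ω = ⟨i, hin⟩ := Fin.ext h
                have : ω = ωi := by rw [hωi, ← this]; simp
                exact hΓ (this ▸ hω)
            · rintro ⟨hω, h⟩; exact ⟨hω, Or.inl h⟩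
          rw [h3, h4]
          exact ih Γ
      · have hGi : G i = Finset.univ := by
          ext ω; simp only [hG, mem_filter, mem_univ, true_and, iff_true]
          omega
        have hGi1 : G (i + 1) = Finset.univ := by
          ext ω; simp only [hG, mem_filter, mem_univ, true_and, iff_true]
          omega
        have h4 : Γ.filter (fun ω => (π ω : ℕ) < i + 1)
            = Γ.filter (fun ω => (π ω : ℕ) < i) := by
          ext ω
          simp only [mem_filter]
          have := (π ω).isLt
          constructor <;> rintro ⟨h1, h2⟩ <;> exact ⟨h1, by omega⟩
        rw [hGi1, ← hGi, h4]
        exact ih Γ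
  constructor
  · intro Γ
    have h := key n Γ
    rw [hGn, Finset.inter_univ] at h
    have hfil : Γ.filter (fun ω => (π ω : ℕ) < n) = Γ :=
      Finset.filter_true_of_mem fun ω _ => (π ω).isLt
    rw [hfil] at h
    exact h
  · have hcomp := Equiv.sum_comp π (fun j : Fin n => χ (G ((j : ℕ) + 1)) - χ (G (j : ℕ)))
    calc (∑ ω : Fin n, (χ (G ((π ω : ℕ) + 1)) - χ (G (π ω : ℕ))))
        = ∑ j : Fin n, (χ (G ((j : ℕ) + 1)) - χ (G (j : ℕ))) := hcomp
      _ = ∑ i ∈ Finset.range n, (χ (G (i + 1)) - χ (G i)) :=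
          Fin.sum_univ_eq_sum_range (fun i => χ (G (i + 1)) - χ (G i)) n
      _ = χ (G n) - χ (G 0) := Finset.sum_range_sub (fun i => χ (G i)) n
      _ = χ Finset.univ := by rw [hGn, hG0, hχ0, sub_zero]
end

section
/- A min-plus service recovers its spectral matrix as its spectrum: if S is a spectral matrix for backlog b, then for all i, j ∈ ℕ, λ_{ij}(ψ^S) := sup_{q ∈ U↑b}(ψ^S_j(q) ∸ q_i) = s_{ij}. -/
/-- A cumulative vector: a nondecreasing sequence `ℕ → ℕ∞` starting at `0`. -/
def Cumulative (x : ℕ → ℕ∞) : Prop := x 0 = 0 ∧ Monotone x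

/-- `U↑b`: cumulative vectors whose first entry is at least `b`. -/
def UUp (b : ℕ) : Set (ℕ → ℕ∞) := {x | Cumulative x ∧ (b : ℕ∞) ≤ x 1}

/-- A spectral matrix for backlog `b`. -/
def SpectralMatrix (b : ℕ) (s : ℕ → ℕ → ℕ∞) : Prop :=
  (∀ i j, j ≤ i → s i j = 0) ∧
  (∀ i j, s i j ≤ s i (j + 1)) ∧
  (∀ i j, s (i + 1) j ≤ s i j) ∧
  (∀ i j, 0 < i → s i j ≤ s 0 j - (b : ℕ∞))

/-- The min-plus service `ψ^S_j(q) = min_i (q_i + s_{ij})`. -/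
noncomputable def minPlus (s : ℕ → ℕ → ℕ∞) (q : ℕ → ℕ∞) (j : ℕ) : ℕ∞ :=
  ⨅ i : ℕ, (q i + s i j)

/-! The bound `ψ^S_j(q) ∸ q_i ≤ s_{ij}` holds for every `q`, taking the `i`-th term of the
infimum. It is attained by the arrival `R^iε + bδ`: for `i > 0` its service is
`min (s_{0j}, b + s_{ij})` because `s_{kj}` decreases in `k`, and subtracting `q_i = b` leaves
`min (s_{0j} ∸ b, s_{ij}) = s_{ij}`. -/

/-- The arrival `R^iε + bδ`. -/
def shiftedBurst (b i : ℕ) (k : ℕ) : ℕ∞ :=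
  if k = 0 then 0 else if k ≤ i then (b : ℕ∞) else ⊤

lemma shiftedBurst_mem_UUp (b i : ℕ) : shiftedBurst b i ∈ UUp b := by
  refine ⟨⟨rfl, fun m n hmn => ?_⟩, ?_⟩
  · unfold shiftedBurst
    split_ifs <;> first | exact le_rfl | exact bot_le | exact le_top | omega
  · unfold shiftedBurst
    split_ifs <;> simp_all

lemma shiftedBurst_self_of_pos (b : ℕ) {i : ℕ} (hi : 0 < i) : shiftedBurst b i i = b := by
  simp [shiftedBurst, hi.ne']

lemma minPlus_le (s : ℕ → ℕ → ℕ∞) (q : ℕ → ℕ∞) (i j : ℕ) : minPlus s q j ≤ q i + s i j :=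
  iInf_le _ i

lemma minPlus_tsub_le (s : ℕ → ℕ → ℕ∞) (q : ℕ → ℕ∞) (i j : ℕ) :
    minPlus s q j - q i ≤ s i j :=
  tsub_le_iff_left.mpr (minPlus_le s q i j)

lemma minPlus_shiftedBurst_zero (s : ℕ → ℕ → ℕ∞) (b j : ℕ) :
    minPlus s (shiftedBurst b 0) j = s 0 j := by
  refine le_antisymm ?_ (le_iInf fun k => ?_)
  · simpa [shiftedBurst] using minPlus_le s (shiftedBurst b 0) 0 j
  rcases k with _ | k <;> simp [shiftedBurst]

lemma minPlus_shiftedBurst_of_pos (s : ℕ → ℕ → ℕ∞) (b : ℕ) {i : ℕ} (hi : 0 < i) (j : ℕ)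
    (hanti : Antitone (s · j)) :
    minPlus s (shiftedBurst b i) j = min (s 0 j) (b + s i j) := by
  refine le_antisymm (le_min ?_ ?_) (le_iInf fun k => ?_)
  · simpa [shiftedBurst] using minPlus_le s (shiftedBurst b i) 0 j
  · simpa [shiftedBurst_self_of_pos b hi] using minPlus_le s (shiftedBurst b i) i j
  · rcases Nat.eq_zero_or_pos k with rfl | hk
    · simp [shiftedBurst]
    by_cases hki : k ≤ i
    · rw [show shiftedBurst b i k = b by simp [shiftedBurst, hk.ne', hki]]
      exact min_le_of_right_le (add_le_add_right (hanti hki) _)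
    · simp [shiftedBurst, hk.ne', hki]

lemma le_minPlus_shiftedBurst_tsub (b : ℕ) (s : ℕ → ℕ → ℕ∞) (hs : SpectralMatrix b s)
    (i j : ℕ) : s i j ≤ minPlus s (shiftedBurst b i) j - shiftedBurst b i i := by
  obtain ⟨-, -, hanti, hb⟩ := hs
  rcases Nat.eq_zero_or_pos i with rfl | hi
  · simp [minPlus_shiftedBurst_zero, shiftedBurst]
  rw [minPlus_shiftedBurst_of_pos s b hi j (antitone_nat_of_succ_le fun k => hanti k j),
    shiftedBurst_self_of_pos b hi,
    Monotone.map_min fun _ _ h => tsub_le_tsub_right h (b : ℕ∞),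
    (ENat.addLECancellable_of_ne_top (ENat.natCast_ne_top b)).add_tsub_cancel_left]
  exact le_min (hb i j hi) le_rfl

/-- A min-plus service recovers its spectral matrix as its spectrum:
`λ_{ij}(ψ^S) = sup_{q ∈ U↑b} (ψ^S_j(q) ∸ q_i) = s_{ij}`. -/
theorem minPlus_spectrum (b : ℕ) (s : ℕ → ℕ → ℕ∞)
    (hs : SpectralMatrix b s) (i j : ℕ) :
    (⨆ q ∈ UUp b, (minPlus s q j - q i)) = s i j :=
  le_antisymm (iSup₂_le fun q _ => minPlus_tsub_le s q i j)
    (le_iSup₂_of_le (shiftedBurst b i) (shiftedBurst_mem_UUp b i)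
      (le_minPlus_shiftedBurst_tsub b s hs i j))
end

section
/- Conditional spectrum of a min-plus service: for a spectral matrix S (for backlog b) and q ≥ b, defining λ̂_{ij} := sup_{x ∈ U|q}(ψ^S_j(x) ∸ x_i), one has λ̂_{0j} = min{s_{0j}, q + s_{1j}} and, for i > 0, λ̂_{ij} = min{(s_{0j} ∸ q), s_{ij}}. -/
/-- `U|q`: cumulative vectors whose first entry is exactly `q`. -/
def UAt (q : ℕ) : Set (ℕ → ℕ∞) := {x | Cumulative x ∧ x 1 = (q : ℕ∞)}

/-!
Every `x ∈ U|q` has `x₀ = 0` and `xᵢ ≥ q` for `i > 0`, so bounding `ψ^S_j(x)` by its terms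
`i = 0` and `i` gives the upper bounds. They are attained by the extremal arrival
`0, q, …, q, ∞, …` (`q` up to position `i`): since the columns of `S` are nonincreasing,
its only relevant terms are exactly those two.
-/

lemma SpectralMatrix.antitone_col {b : ℕ} {s : ℕ → ℕ → ℕ∞} (hs : SpectralMatrix b s) (j : ℕ) :
    Antitone (s · j) :=
  antitone_nat_of_succ_le (hs.2.2.1 · j)

lemma minPlus_le_add (s : ℕ → ℕ → ℕ∞) (x : ℕ → ℕ∞) (j k : ℕ) :
    minPlus s x j ≤ x k + s k j :=
  iInf_le _ k

/-- The arrival `R^i ε + q δ` of the paper. -/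
def extremalArrival (q i : ℕ) (k : ℕ) : ℕ∞ :=
  if k = 0 then 0 else if k ≤ i then (q : ℕ∞) else ⊤

lemma extremalArrival_mem_UAt {i : ℕ} (q : ℕ) (hi : 0 < i) : extremalArrival q i ∈ UAt q := by
  refine ⟨⟨by simp [extremalArrival], fun a c hac => ?_⟩, by simp [extremalArrival, hi.ne']⟩
  unfold extremalArrival
  split_ifs <;> first | exact le_rfl | exact bot_le | exact le_top | omega

lemma minPlus_extremalArrival {b : ℕ} {s : ℕ → ℕ → ℕ∞} (hs : SpectralMatrix b s)
    (q : ℕ) {i : ℕ} (hi : 0 < i) (j : ℕ) :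
    minPlus s (extremalArrival q i) j = min (s 0 j) ((q : ℕ∞) + s i j) := by
  refine le_antisymm (le_min ?_ ?_) (le_iInf fun k => ?_)
  · simpa [extremalArrival] using minPlus_le_add s (extremalArrival q i) j 0
  · simpa [extremalArrival, hi.ne'] using minPlus_le_add s (extremalArrival q i) j i
  · unfold extremalArrival
    split_ifs with hk₀ hki
    · simp [hk₀]
    · exact (min_le_right _ _).trans (add_le_add_right (hs.antitone_col j hki) _)
    · exact le_top

lemma minPlus_sub_apply_zero_le {q : ℕ} {x : ℕ → ℕ∞} (hx : x ∈ UAt q) (s : ℕ → ℕ → ℕ∞)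
    (j : ℕ) : minPlus s x j - x 0 ≤ min (s 0 j) ((q : ℕ∞) + s 1 j) := by
  obtain ⟨⟨hx₀, -⟩, hx₁⟩ := hx
  rw [hx₀, tsub_zero]
  exact le_min (by simpa [hx₀] using minPlus_le_add s x j 0)
    (by simpa [hx₁] using minPlus_le_add s x j 1)

lemma minPlus_sub_apply_le {q : ℕ} {x : ℕ → ℕ∞} (hx : x ∈ UAt q) (s : ℕ → ℕ → ℕ∞)
    {i : ℕ} (hi : 0 < i) (j : ℕ) : minPlus s x j - x i ≤ min (s 0 j - (q : ℕ∞)) (s i j) := by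
  obtain ⟨⟨hx₀, hmono⟩, hx₁⟩ := hx
  refine le_min (tsub_le_tsub (by simpa [hx₀] using minPlus_le_add s x j 0) ?_) ?_
  · exact hx₁ ▸ hmono hi
  · exact tsub_le_iff_left.mpr (minPlus_le_add s x j i)

lemma min_add_tsub_natCast (a c : ℕ∞) (q : ℕ) :
    min a ((q : ℕ∞) + c) - q = min (a - q) c := by
  have hmono : Monotone (· - (q : ℕ∞)) := fun _ _ h => tsub_le_tsub_right h _
  rw [hmono.map_min, (ENat.addLECancellable_natCast q).add_tsub_cancel_left]

theorem minPlus_condSpectrum_general (b q : ℕ) (s : ℕ → ℕ → ℕ∞)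
    (hs : SpectralMatrix b s) (j : ℕ) :
    (⨆ x ∈ UAt q, (minPlus s x j - x 0)) = min (s 0 j) ((q : ℕ∞) + s 1 j) ∧
    ∀ i : ℕ, 0 < i →
      (⨆ x ∈ UAt q, (minPlus s x j - x i)) = min (s 0 j - (q : ℕ∞)) (s i j) := by
  refine ⟨le_antisymm (iSup₂_le fun x hx => minPlus_sub_apply_zero_le hx s j) ?_,
    fun i hi => le_antisymm (iSup₂_le fun x hx => minPlus_sub_apply_le hx s hi j) ?_⟩
  · refine le_iSup₂_of_le (extremalArrival q 1) (extremalArrival_mem_UAt q one_pos) ?_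
    simp [minPlus_extremalArrival hs q one_pos, extremalArrival]
  · refine le_iSup₂_of_le (extremalArrival q i) (extremalArrival_mem_UAt q hi) ?_
    simp only [minPlus_extremalArrival hs q hi, extremalArrival, hi.ne', if_false, if_true,
      min_add_tsub_natCast, le_rfl]

/-- The conditional spectrum of a min-plus service:
`λ̂_{0j} = min{s_{0j}, q + s_{1j}}` and, for `i > 0`,
`λ̂_{ij} = min{(s_{0j} ∸ q), s_{ij}}`. -/
theorem minPlus_condSpectrum (b q : ℕ) (hbq : b ≤ q) (s : ℕ → ℕ → ℕ∞)
    (hs : SpectralMatrix b s) (j : ℕ) :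
    (⨆ x ∈ UAt q, (minPlus s x j - x 0)) = min (s 0 j) ((q : ℕ∞) + s 1 j) ∧
    ∀ i : ℕ, 0 < i →
      (⨆ x ∈ UAt q, (minPlus s x j - x i)) = min (s 0 j - (q : ℕ∞)) (s i j) :=
  minPlus_condSpectrum_general b q s hs j
end

section
/- Reduction of a cumulative matrix to a spectral matrix: given a cumulative matrix M (m_{ij}=0 for i≥j, m_{ij} ≤ m_{i,j+1}) and b ∈ ℕ, define s_{0j} := m_{0j} and, for i>0, s_{ij} := min{(m_{0j} ∸ b), min_{1≤k≤i} m_{kj}}. Then S = [s_{ij}] is a spectral matrix for b and the induced min-plus services agree: for all q ∈ U↑b and j, min_i(q_i + s_{ij}) = min_i(q_i + m_{ij}). -/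
/-- A cumulative matrix: strictly upper triangular with nondecreasing rows. -/
def CumulativeMatrix (m : ℕ → ℕ → ℕ∞) : Prop :=
  (∀ i j, j ≤ i → m i j = 0) ∧ (∀ i j, m i j ≤ m i (j + 1))

/-- The reduction of a cumulative matrix `m` to a spectral matrix for `b`. -/
noncomputable def reduceMat (b : ℕ) (m : ℕ → ℕ → ℕ∞) (i j : ℕ) : ℕ∞ :=
  if i = 0 then m 0 j
  else min (m 0 j - (b : ℕ∞)) (⨅ k ∈ Finset.Icc 1 i, m k j)

namespace reduceMat

variable {b : ℕ} {m : ℕ → ℕ → ℕ∞} {i j : ℕ}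

@[simp]
lemma zero_left : reduceMat b m 0 j = m 0 j := if_pos rfl

lemma of_pos (hi : 0 < i) :
    reduceMat b m i j = min (m 0 j - b) (⨅ k ∈ Finset.Icc 1 i, m k j) :=
  if_neg hi.ne'

lemma le_sub_zero_left (hi : 0 < i) : reduceMat b m i j ≤ reduceMat b m 0 j - b := by
  rw [of_pos hi, zero_left]
  exact min_le_left _ _

lemma le_self : reduceMat b m i j ≤ m i j := by
  rcases Nat.eq_zero_or_pos i with rfl | hi
  · exact zero_left.le
  · rw [of_pos hi]
    exact (min_le_right _ _).trans (iInf₂_le i (Finset.mem_Icc.mpr ⟨hi, le_rfl⟩))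

lemma succ_left_le : reduceMat b m (i + 1) j ≤ reduceMat b m i j := by
  rcases Nat.eq_zero_or_pos i with rfl | hi
  · exact (le_sub_zero_left Nat.one_pos).trans tsub_le_self
  · rw [of_pos hi, of_pos i.succ_pos]
    exact min_le_min le_rfl
      (biInf_mono fun k hk => Finset.Icc_subset_Icc_right i.le_succ hk)

lemma le_succ_right (hrow : ∀ i j, m i j ≤ m i (j + 1)) :
    reduceMat b m i j ≤ reduceMat b m i (j + 1) := by
  rcases Nat.eq_zero_or_pos i with rfl | hi
  · simpa only [zero_left] using hrow 0 j
  · rw [of_pos hi, of_pos hi]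
    exact min_le_min (tsub_le_tsub_right (hrow 0 j) _) (iInf₂_mono fun k _ => hrow k j)

theorem spectralMatrix (hm : CumulativeMatrix m) : SpectralMatrix b (reduceMat b m) :=
  ⟨fun i j hji => le_antisymm (le_self.trans_eq (hm.1 i j hji)) zero_le,
    fun _ _ => le_succ_right hm.2, fun _ _ => succ_left_le, fun _ _ => le_sub_zero_left⟩

/-- The `m 0 j - b` entry is dominated by row `0` since `q 0 = 0` and `b ≤ q i`, and each `m k j`
with `k ≤ i` by row `k` since `q k ≤ q i`. -/
lemma iInf_add_le_add {q : ℕ → ℕ∞} (hq : q ∈ UUp b) (i j : ℕ) :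
    ⨅ k, q k + m k j ≤ q i + reduceMat b m i j := by
  obtain ⟨⟨hq0, hqmono⟩, hqb⟩ := hq
  rcases Nat.eq_zero_or_pos i with rfl | hi
  · simpa only [zero_left] using iInf_le (fun k => q k + m k j) 0
  rw [of_pos hi, ← min_add_add_left]
  refine le_min ?_ ?_
  · calc ⨅ k, q k + m k j ≤ q 0 + m 0 j := iInf_le _ 0
      _ = m 0 j := by rw [hq0, zero_add]
      _ ≤ b + (m 0 j - b) := le_add_tsub
      _ ≤ q i + (m 0 j - b) := add_le_add_left (hqb.trans (hqmono hi)) _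
  · rw [ENat.add_iInf₂]
    exact le_iInf₂ fun k hk =>
      (iInf_le _ k).trans (add_le_add_left (hqmono (Finset.mem_Icc.mp hk).2) _)

end reduceMat

/-- Reducing a cumulative matrix yields a spectral matrix inducing the same
min-plus service on `U↑b`. -/
theorem reduce_cumulative_matrix (b : ℕ) (m : ℕ → ℕ → ℕ∞)
    (hm : CumulativeMatrix m) :
    SpectralMatrix b (reduceMat b m) ∧
    ∀ q ∈ UUp b, ∀ j : ℕ,
      (⨅ i : ℕ, (q i + reduceMat b m i j)) = ⨅ i : ℕ, (q i + m i j) :=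
  ⟨reduceMat.spectralMatrix hm, fun _ hq j =>
    le_antisymm (iInf_mono fun _ => add_le_add_right reduceMat.le_self _)
      (le_iInf fun i => reduceMat.iInf_add_le_add hq i j)⟩
end

section
/- Composition of dual-curve services: if ψ^I = ψ^{(u^I, v^I)} and ψ^{II} = ψ^{(u^{II}, v^{II})} are dual-curve services with backlogs b^I and b^{II}, then the composed service ψ(q) := ψ^{II}(ψ^I(q − b^{II}δ) + b^{II}δ) is the dual-curve service ψ^{(u,v)} with u_j = min{u_j^{II}, min_{1≤i≤j}(u_i^I + b^{II} + v_{j−i}^{II})} and v_j = min_{0≤i≤j}(v_i^I + v_{j−i}^{II}), for all q ∈ U↑b with b = b^I + b^{II}. -/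
/-- The dual-curve service `ψ^{(u,v)}_j(q) = min{u_j, min_{1≤i≤j}(q_i + v_{j−i})}`
for `j ≥ 1`, with `ψ^{(u,v)}_0(q) = 0`. -/
noncomputable def dualCurve (u v : ℕ → ℕ∞) (q : ℕ → ℕ∞) (j : ℕ) : ℕ∞ :=
  if j = 0 then 0
  else min (u j) (⨅ i ∈ Finset.Icc 1 j, (q i + v (j - i)))

/-- The vector `bδ`: `0` at index `0` and `b` elsewhere. -/
def bDelta (b : ℕ) : ℕ → ℕ∞ := fun k => if k = 0 then 0 else (b : ℕ∞)

/-- A binary infimum over a nonempty finset of `ℕ∞` is attained. -/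
lemma exists_eq_biInf {s : Finset ℕ} (hs : s.Nonempty) (f : ℕ → ℕ∞) :
    ∃ k ∈ s, (⨅ i ∈ s, f i) = f k := by
  obtain ⟨k, hk, h⟩ := Finset.exists_mem_eq_inf' hs f
  exact ⟨k, hk, by rw [← Finset.inf_eq_iInf, ← Finset.inf'_eq_inf hs, h]⟩

/-- Rearrangement: `(x - c + a) + c + b = x + (a + b)` when `c ≤ x`, in `ℕ∞`. -/
lemma rearr {x c : ℕ∞} (h : c ≤ x) (a b : ℕ∞) :
    x - c + a + c + b = x + (a + b) := by
  rw [add_right_comm (x - c) a c, tsub_add_cancel_of_le h, add_assoc]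

/-- Composition of dual-curve services:
`ψ^{II}(ψ^I(q − b^{II}δ) + b^{II}δ) = ψ^{(u,v)}(q)` with
`u_j = min{u^{II}_j, min_{1≤i≤j}(u^I_i + b^{II} + v^{II}_{j−i})}` and
`v_j = min_{0≤i≤j}(v^I_i + v^{II}_{j−i})`. -/
theorem dualCurve_compose (uI vI uII vII : ℕ → ℕ∞)
    (huI : Cumulative uI) (hvI : Cumulative vI)
    (huII : Cumulative uII) (hvII : Cumulative vII)
    (bI bII : ℕ) :
    ∀ q ∈ UUp (bI + bII), ∀ j : ℕ,
      dualCurve uII vII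
          (fun k => dualCurve uI vI (fun l => q l - bDelta bII l) k + bDelta bII k) j
        = dualCurve
            (fun j' => min (uII j')
              (⨅ i ∈ Finset.Icc 1 j', (uI i + (bII : ℕ∞) + vII (j' - i))))
            (fun j' => ⨅ i ∈ Finset.Icc 0 j', (vI i + vII (j' - i)))
            q j := by
  rintro q ⟨⟨hq0, hqmono⟩, hq1⟩ j
  rcases Nat.eq_zero_or_pos j with rfl | hj
  · simp [dualCurve]
  have hjne : j ≠ 0 := hj.ne'
  have hqc : ∀ k, 1 ≤ k → (bII : ℕ∞) ≤ q k := by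
    intro k hk
    calc (bII : ℕ∞) ≤ ((bI + bII : ℕ) : ℕ∞) := by exact_mod_cast Nat.le_add_left _ _
      _ ≤ q 1 := hq1
      _ ≤ q k := hqmono hk
  have hbd : ∀ k : ℕ, k ≠ 0 → bDelta bII k = (bII : ℕ∞) := by
    intro k hk; simp [bDelta, hk]
  have hdc : ∀ u v p, dualCurve u v p j
      = min (u j) (⨅ i ∈ Finset.Icc 1 j, (p i + v (j - i))) := by
    intro u v p; simp only [dualCurve, if_neg hjne]
  have hDle : ∀ i : ℕ, i ≠ 0 →
      dualCurve uI vI (fun l => q l - bDelta bII l) i ≤ uI i := by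
    intro i hi
    simp only [dualCurve, if_neg hi]
    exact min_le_left _ _
  have hDle2 : ∀ i : ℕ, i ≠ 0 → ∀ k ∈ Finset.Icc 1 i,
      dualCurve uI vI (fun l => q l - bDelta bII l) i
        ≤ q k - bDelta bII k + vI (i - k) := by
    intro i hi k hk
    simp only [dualCurve, if_neg hi]
    exact (min_le_right _ _).trans (iInf₂_le k hk)
  rw [hdc, hdc]
  apply le_antisymm
  · refine le_min (le_min (min_le_left _ _) ?_) ?_
    · refine le_iInf₂ fun i hi => ?_
      obtain ⟨hi1, hij⟩ := Finset.mem_Icc.mp hi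
      have hine : i ≠ 0 := by omega
      refine (min_le_right _ _).trans ((iInf₂_le i hi).trans ?_)
      simp only [hbd i hine]
      gcongr
      exact hDle i hine
    · refine le_iInf₂ fun k hk => ?_
      obtain ⟨hk1, hkj⟩ := Finset.mem_Icc.mp hk
      obtain ⟨m, hm, hminf⟩ := exists_eq_biInf (s := Finset.Icc 0 (j - k))
        ⟨0, by simp⟩ (fun m => vI m + vII (j - k - m))
      rw [hminf]
      obtain ⟨_, hmjk⟩ := Finset.mem_Icc.mp hm
      have hikj : k + m ∈ Finset.Icc 1 j := Finset.mem_Icc.mpr ⟨by omega, by omega⟩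
      refine (min_le_right _ _).trans ((iInf₂_le (k + m) hikj).trans ?_)
      have h1 : dualCurve uI vI (fun l => q l - bDelta bII l) (k + m)
          ≤ q k - bDelta bII k + vI m := by
        have := hDle2 (k + m) (by omega) k (Finset.mem_Icc.mpr ⟨hk1, by omega⟩)
        simpa [Nat.add_sub_cancel_left] using this
      have hkne : k ≠ 0 := by omega
      rw [hbd k hkne] at h1
      simp only [hbd (k + m) (show k + m ≠ 0 by omega)]
      calc dualCurve uI vI (fun l => q l - bDelta bII l) (k + m) + (bII : ℕ∞)
            + vII (j - (k + m))
          ≤ (q k - (bII : ℕ∞) + vI m) + (bII : ℕ∞) + vII (j - (k + m)) := by gcongr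
        _ = q k + (vI m + vII (j - k - m)) := by
            rw [show j - (k + m) = j - k - m by omega]
            exact rearr (hqc k hk1) _ _
  · refine le_min ((min_le_left _ _).trans (min_le_left _ _)) ?_
    refine le_iInf₂ fun i hi => ?_
    obtain ⟨hi1, hij⟩ := Finset.mem_Icc.mp hi
    have hine : i ≠ 0 := by omega
    have hDeq : dualCurve uI vI (fun l => q l - bDelta bII l) i = min (uI i)
        (⨅ k ∈ Finset.Icc 1 i, (q k - bDelta bII k + vI (i - k))) := by
      simp only [dualCurve, if_neg hine]
    simp only [hbd i hine, hDeq]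
    rcases le_total (uI i) (⨅ k ∈ Finset.Icc 1 i, (q k - bDelta bII k + vI (i - k)))
      with hcase | hcase
    · rw [min_eq_left hcase]
      exact (min_le_left _ _).trans ((min_le_right _ _).trans (iInf₂_le i hi))
    · rw [min_eq_right hcase]
      obtain ⟨k, hk, hkinf⟩ := exists_eq_biInf (s := Finset.Icc 1 i)
        ⟨1, Finset.mem_Icc.mpr ⟨le_refl _, hi1⟩⟩
        (fun k => q k - bDelta bII k + vI (i - k))
      obtain ⟨hk1, hki⟩ := Finset.mem_Icc.mp hk
      have hkne : k ≠ 0 := by omega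
      rw [hkinf, hbd k hkne]
      rw [rearr (hqc k hk1) (vI (i - k)) (vII (j - i))]
      have hkmem : k ∈ Finset.Icc 1 j := Finset.mem_Icc.mpr ⟨hk1, by omega⟩
      refine (min_le_right _ _).trans ((iInf₂_le k hkmem).trans ?_)
      gcongr
      have hmmem : i - k ∈ Finset.Icc 0 (j - k) := Finset.mem_Icc.mpr ⟨by omega, by omega⟩
      refine (iInf₂_le (i - k) hmmem).trans ?_
      rw [show j - k - (i - k) = j - i by omega]
end

section
/- Monotone worst-case services compose into a worst-case service: if ψ^I: U↑b^I → U and ψ^{II}: U↑b^{II} → U are worst-case services (ψ(x) ≤ x) and ψ^{II} is monotone, then ψ(q) := ψ^{II}(ψ^I(q − b^{II}δ) + b^{II}δ) satisfies ψ(q) ≤ q for all q ∈ U↑(b^I + b^{II}); if additionally ψ^I is monotone, then ψ is monotone. -/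
/-- The composition `ψ(q) = ψ^{II}(ψ^I(q − b^{II}δ) + b^{II}δ)`. -/
noncomputable def compServ (bII : ℕ) (ψI ψII : (ℕ → ℕ∞) → (ℕ → ℕ∞)) :
    (ℕ → ℕ∞) → (ℕ → ℕ∞) := fun q =>
  ψII (fun k => ψI (fun l => q l - bDelta bII l) k + bDelta bII k)

/-!
The intermediate vector `y = ψI (q - bII δ) + bII δ` lies in `U↑bII`, so `ψII` may be applied
to it. Since `bII δ ≤ q`, adding `bII δ` back undoes the truncated subtraction, whence
`ψ q ≤ y ≤ q`; monotonicity passes through each of the three stages of `ψ`.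
-/

theorem bDelta_zero (b : ℕ) : bDelta b 0 = 0 := rfl

theorem bDelta_of_ne_zero (b : ℕ) {k : ℕ} (hk : k ≠ 0) : bDelta b k = b := if_neg hk

theorem bDelta_monotone (b : ℕ) : Monotone (bDelta b) := by
  intro k l hkl
  rcases eq_or_ne k 0 with rfl | hk
  · exact zero_le
  · rw [bDelta_of_ne_zero b hk, bDelta_of_ne_zero b (by omega)]

theorem UUp_anti : Antitone UUp :=
  fun _ _ hab _ hx => ⟨hx.1, (Nat.cast_le.2 hab).trans hx.2⟩

theorem bDelta_le_of_mem_UUp {b : ℕ} {x : ℕ → ℕ∞} (hx : x ∈ UUp b) : bDelta b ≤ x := by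
  intro k
  rcases eq_or_ne k 0 with rfl | hk
  · exact zero_le
  · rw [bDelta_of_ne_zero b hk]
    exact hx.2.trans (hx.1.2 (Nat.one_le_iff_ne_zero.2 hk))

theorem Cumulative.sub_bDelta {x : ℕ → ℕ∞} (hx : Cumulative x) (b : ℕ) :
    Cumulative (x - bDelta b) := by
  refine ⟨by simp [hx.1], fun k l hkl => ?_⟩
  rcases eq_or_ne k 0 with rfl | hk
  · simp [hx.1]
  · simp only [Pi.sub_apply, bDelta_of_ne_zero b hk, bDelta_of_ne_zero b (by omega : l ≠ 0)]
    exact tsub_le_tsub_right (hx.2 hkl) _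

theorem sub_bDelta_mem_UUp {a b : ℕ} {q : ℕ → ℕ∞} (hq : q ∈ UUp (a + b)) :
    q - bDelta b ∈ UUp a := by
  refine ⟨hq.1.sub_bDelta b, ?_⟩
  rw [Pi.sub_apply, bDelta_of_ne_zero b one_ne_zero]
  exact ENat.le_sub_of_add_le_left (ENat.natCast_ne_top b) (by simpa [add_comm] using hq.2)

theorem Cumulative.add_bDelta_mem_UUp {x : ℕ → ℕ∞} (hx : Cumulative x) (b : ℕ) :
    x + bDelta b ∈ UUp b :=
  ⟨⟨by simp [hx.1, bDelta_zero], hx.2.add (bDelta_monotone b)⟩,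
    by simp [bDelta_of_ne_zero b one_ne_zero]⟩

theorem compose_worst_case_general (bI bII : ℕ) (ψI ψII : (ℕ → ℕ∞) → (ℕ → ℕ∞))
    (hI : ∀ x ∈ UUp bI, ∀ j, ψI x j ≤ x j)
    (hIcum : ∀ x ∈ UUp bI, Cumulative (ψI x))
    (hII : ∀ x ∈ UUp bII, ∀ j, ψII x j ≤ x j)
    (hIImono : ∀ x ∈ UUp bII, ∀ x' ∈ UUp bII,
      (∀ k, x' k ≤ x k) → ∀ j, ψII x' j ≤ ψII x j) :
    (∀ q ∈ UUp (bI + bII), ∀ j, compServ bII ψI ψII q j ≤ q j) ∧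
    ((∀ x ∈ UUp bI, ∀ x' ∈ UUp bI,
        (∀ k, x' k ≤ x k) → ∀ j, ψI x' j ≤ ψI x j) →
      ∀ q ∈ UUp (bI + bII), ∀ q' ∈ UUp (bI + bII),
        (∀ k, q' k ≤ q k) → ∀ j, compServ bII ψI ψII q' j ≤ compServ bII ψI ψII q j) := by
  have hsub : ∀ q ∈ UUp (bI + bII), q - bDelta bII ∈ UUp bI := fun _ => sub_bDelta_mem_UUp
  have hmid : ∀ q ∈ UUp (bI + bII), ψI (q - bDelta bII) + bDelta bII ∈ UUp bII :=
    fun q hq => (hIcum _ (hsub q hq)).add_bDelta_mem_UUp bII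
  refine ⟨fun q hq => ?_, fun hImono q hq q' hq' hle => ?_⟩
  · calc compServ bII ψI ψII q ≤ ψI (q - bDelta bII) + bDelta bII := hII _ (hmid q hq)
      _ ≤ q := add_le_of_le_tsub_right_of_le
        (bDelta_le_of_mem_UUp (UUp_anti (Nat.le_add_left bII bI) hq)) (hI _ (hsub q hq))
  · have hsub_le : q' - bDelta bII ≤ q - bDelta bII := tsub_le_tsub_right hle _
    have hI_le : ψI (q' - bDelta bII) ≤ ψI (q - bDelta bII) :=
      hImono _ (hsub q hq) _ (hsub q' hq') hsub_le
    exact hIImono _ (hmid q hq) _ (hmid q' hq') (add_le_add_left hI_le _)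

/-- Monotone worst-case services compose into a worst-case service, and the
composition of monotone services is monotone. -/
theorem compose_worst_case (bI bII : ℕ) (ψI ψII : (ℕ → ℕ∞) → (ℕ → ℕ∞))
    (hI : ∀ x ∈ UUp bI, ∀ j, ψI x j ≤ x j)
    (hIcum : ∀ x ∈ UUp bI, Cumulative (ψI x))
    (hII : ∀ x ∈ UUp bII, ∀ j, ψII x j ≤ x j)
    (hIIcum : ∀ x ∈ UUp bII, Cumulative (ψII x))
    (hIImono : ∀ x ∈ UUp bII, ∀ x' ∈ UUp bII,
      (∀ k, x' k ≤ x k) → ∀ j, ψII x' j ≤ ψII x j) :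
    (∀ q ∈ UUp (bI + bII), ∀ j, compServ bII ψI ψII q j ≤ q j) ∧
    ((∀ x ∈ UUp bI, ∀ x' ∈ UUp bI,
        (∀ k, x' k ≤ x k) → ∀ j, ψI x' j ≤ ψI x j) →
      ∀ q ∈ UUp (bI + bII), ∀ q' ∈ UUp (bI + bII),
        (∀ k, q' k ≤ q k) → ∀ j, compServ bII ψI ψII q' j ≤ compServ bII ψI ψII q j) :=
  compose_worst_case_general bI bII ψI ψII hI hIcum hII hIImono
end

section
/- The updated worst-case service is a worst-case service: if ψ: U↑b → U satisfies ψ(x) ≤ x, and q ≥ d ≥ p where p := sup_{x∈U|q} ψ_1(x), then ψ̇ defined by ψ̇_j(x̊) := ψ_{j+1}(x) ∸ d (with x ∈ U|q corresponding to x̊ ∈ U↑(q−d) via x_1 = q, x_{j+1} = x̊_j + d for j ≥ 1) satisfies ψ̇(x̊) ≤ x̊ for all x̊ ∈ U↑(q−d), and each ψ̇(x̊) is a cumulative vector. -/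
/-- The arrival vector `x ∈ U|q` corresponding to the next-slot vector `x̊`:
`x_0 = 0`, `x_1 = q`, and `x_{j+1} = x̊_j + d` for `j ≥ 1`. -/
def liftArr (q d : ℕ) (x' : ℕ → ℕ∞) : ℕ → ℕ∞ := fun k =>
  if k = 0 then 0 else if k = 1 then (q : ℕ∞) else x' (k - 1) + (d : ℕ∞)

/-! The lifted vector `x = liftArr q d x̊` lies in `U|q ⊆ U↑b`, so `ψ(x) ≤ x` and `ψ(x)` is
cumulative; moreover `ψ_1(x) ≤ p ≤ d`. Hence `ψ_1(x) ∸ d = 0 = x̊_0`, and for `j ≥ 1`,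
`ψ_{j+1}(x) ≤ x_{j+1} = x̊_j + d` gives `ψ̇_j(x̊) ≤ x̊_j`. -/

section liftArr

variable {q d : ℕ} {x' : ℕ → ℕ∞}

@[simp]
theorem liftArr_zero : liftArr q d x' 0 = 0 := rfl

@[simp]
theorem liftArr_one : liftArr q d x' 1 = q := rfl

@[simp]
theorem liftArr_add_two (k : ℕ) : liftArr q d x' (k + 2) = x' (k + 1) + d := rfl

theorem monotone_liftArr (hdq : d ≤ q) (hx' : x' ∈ UUp (q - d)) : Monotone (liftArr q d x') := by
  obtain ⟨⟨-, hmono⟩, hx'1⟩ := hx'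
  refine monotone_nat_of_le_succ fun k => ?_
  match k with
  | 0 => simp
  | 1 =>
    calc ((q : ℕ) : ℕ∞) = ((q - d : ℕ) : ℕ∞) + d := by rw [← Nat.cast_add, Nat.sub_add_cancel hdq]
      _ ≤ x' 1 + d := by gcongr
  | k + 2 => exact add_le_add_left (hmono k.succ.le_succ) _

theorem liftArr_mem_UAt (hdq : d ≤ q) (hx' : x' ∈ UUp (q - d)) : liftArr q d x' ∈ UAt q :=
  ⟨⟨liftArr_zero, monotone_liftArr hdq hx'⟩, liftArr_one⟩

end liftArr

theorem UAt_subset_UUp {b q : ℕ} (hbq : b ≤ q) : UAt q ⊆ UUp b :=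
  fun _ ⟨hx, hx1⟩ => ⟨hx, hx1 ▸ Nat.cast_le.mpr hbq⟩

theorem cumulative_shift_tsub {y : ℕ → ℕ∞} {d : ℕ∞} (hy : Monotone y) (hy1 : y 1 ≤ d) :
    Cumulative (fun j => y (j + 1) - d) :=
  ⟨tsub_eq_zero_of_le hy1, fun _ _ hij => tsub_le_tsub_right (hy (Nat.succ_le_succ hij)) _⟩

theorem shift_tsub_le_of_le_liftArr {q d : ℕ} {x' y : ℕ → ℕ∞}
    (hy : ∀ j, y j ≤ liftArr q d x' j) (hy1 : y 1 ≤ d) (j : ℕ) : y (j + 1) - d ≤ x' j := by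
  cases j with
  | zero => exact (tsub_eq_zero_of_le hy1).trans_le zero_le
  | succ j => exact tsub_le_iff_right.mpr (hy (j + 2))

/-- The updated worst-case service is a worst-case service: if `ψ(x) ≤ x` on
`U↑b` and `q ≥ d ≥ p`, then `ψ̇_j(x̊) := ψ_{j+1}(x) ∸ d` satisfies `ψ̇(x̊) ≤ x̊`
and is cumulative. -/
theorem updated_worst_case (b : ℕ) (ψ : (ℕ → ℕ∞) → (ℕ → ℕ∞))
    (hψ : ∀ x ∈ UUp b, ∀ j, ψ x j ≤ x j)
    (hψcum : ∀ x ∈ UUp b, Cumulative (ψ x))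
    (q d : ℕ) (hbq : b ≤ q) (hdq : d ≤ q)
    (hpd : (⨆ x ∈ UAt q, ψ x 1) ≤ (d : ℕ∞)) :
    ∀ x' ∈ UUp (q - d),
      (∀ j, ψ (liftArr q d x') (j + 1) - (d : ℕ∞) ≤ x' j) ∧
      Cumulative (fun j => ψ (liftArr q d x') (j + 1) - (d : ℕ∞)) := by
  intro x' hx'
  have hxAt := liftArr_mem_UAt hdq hx'
  have hxUp := UAt_subset_UUp hbq hxAt
  have hψ1 : ψ (liftArr q d x') 1 ≤ d :=
    (le_iSup₂ (f := fun x (_ : x ∈ UAt q) => ψ x 1) _ hxAt).trans hpd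
  exact ⟨shift_tsub_le_of_le_liftArr (hψ _ hxUp) hψ1,
    cumulative_shift_tsub (hψcum _ hxUp).2 hψ1⟩
end

section
/- For each flow ω, let p_j^ω be nondecreasing in j with p_j^ω ≤ q^ω, and for Γ ⊆ Ω let β(Γ) := max_{j∈ℕ}(Σ_{ω∈Γ} p_{j+1}^ω + Σ_{ω∈Ω} λ̂^ω_{1,j+1} − c_{1,j+1}), attained at index j_β^Γ, where Σ_{ω∈Ω} λ̂^ω_{1,j+1} ≤ c_{1,j+1} for all j. If Σ_{ω∈Ω} p_j^ω ≥ β(Ω), then Σ_{ω∈Γ} p_j^ω ≥ β(Γ) for every Γ ⊆ Ω. -/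
open Finset

/-- Feasibility of the spectral staircase point: if the total `Σ_{ω∈Ω} p_j^ω`
dominates `β(Ω)`, then `Σ_{ω∈Γ} p_j^ω` dominates `β(Γ)` for every `Γ ⊆ Ω`,
where `β(Γ) = max_{j}(Σ_{ω∈Γ} p_{j+1}^ω + Σ_{ω∈Ω} λ̂_{1,j+1}^ω − c_{1,j+1})`
is attained at `jβ Γ` and `Σ_{ω∈Ω} λ̂_{1,j}^ω ≤ c_{1,j}` for all `j ≥ 1`. -/
theorem staircase_feasible {Ω : Type*} [Fintype Ω] [DecidableEq Ω]
    (p : ℕ → Ω → ℕ) (lam : ℕ → Ω → ℕ) (c : ℕ → ℕ) (q : Ω → ℕ)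
    (hp : ∀ ω, Monotone fun j => p j ω)
    (hpq : ∀ ω j, p j ω ≤ q ω)
    (hsched : ∀ j : ℕ, 1 ≤ j → (∑ ω : Ω, lam j ω) ≤ c j)
    (β : Finset Ω → ℤ) (jβ : Finset Ω → ℕ)
    (hβ : ∀ Γ : Finset Ω,
      β Γ = (∑ ω ∈ Γ, (p (jβ Γ + 1) ω : ℤ)) + (∑ ω : Ω, (lam (jβ Γ + 1) ω : ℤ))
              - (c (jβ Γ + 1) : ℤ))
    (hβmax : ∀ (Γ : Finset Ω) (j : ℕ),
      (∑ ω ∈ Γ, (p (j + 1) ω : ℤ)) + (∑ ω : Ω, (lam (j + 1) ω : ℤ))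
          - (c (j + 1) : ℤ) ≤ β Γ)
    (j : ℕ)
    (htot : β Finset.univ ≤ ∑ ω : Ω, (p j ω : ℤ)) :
    ∀ Γ : Finset Ω, β Γ ≤ ∑ ω ∈ Γ, (p j ω : ℤ) := by
  intro Γ
  set k := jβ Γ + 1 with hk
  have hsc : (∑ ω : Ω, (lam k ω : ℤ)) - (c k : ℤ) ≤ 0 := by
    have h := hsched k (Nat.le_add_left 1 _)
    have : (∑ ω : Ω, (lam k ω : ℤ)) ≤ (c k : ℤ) := by exact_mod_cast h
    linarith
  by_cases hle : k ≤ j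
  · have hmono : (∑ ω ∈ Γ, (p k ω : ℤ)) ≤ ∑ ω ∈ Γ, (p j ω : ℤ) :=
      Finset.sum_le_sum fun ω _ => by exact_mod_cast hp ω hle
    have := hβ Γ
    linarith
  · push_neg at hle
    have hjk : j ≤ k := le_of_lt hle
    -- β univ ≥ value at index jβ Γ
    have huniv : (∑ ω : Ω, (p k ω : ℤ)) + (∑ ω : Ω, (lam k ω : ℤ)) - (c k : ℤ)
        ≤ β Finset.univ := hβmax Finset.univ (jβ Γ)
    have hsplit : (∑ ω : Ω, (p k ω : ℤ)) =
        (∑ ω ∈ Γ, (p k ω : ℤ)) + ∑ ω ∈ Γᶜ, (p k ω : ℤ) := by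
      rw [Finset.sum_add_sum_compl]
    have hsplitj : (∑ ω : Ω, (p j ω : ℤ)) =
        (∑ ω ∈ Γ, (p j ω : ℤ)) + ∑ ω ∈ Γᶜ, (p j ω : ℤ) := by
      rw [Finset.sum_add_sum_compl]
    have hmonoC : (∑ ω ∈ Γᶜ, (p j ω : ℤ)) ≤ ∑ ω ∈ Γᶜ, (p k ω : ℤ) :=
      Finset.sum_le_sum fun ω _ => by exact_mod_cast hp ω hjk
    have := hβ Γ
    linarith
end
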